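/- Let k ≤ n and μ_1,…,μ_k ∈ ℂ˟, and let z ∈ Cl_N(q,c) with τ the anti-automorphism γ_i ↦ γ_{i'}. Then the following are equivalent: (i) zγ_i = μ_iγ_i z and τ(z)γ_i = μ_iγ_i τ(z) for i = 1,…,k; (ii) ∂_i(z) = 0 for i ≤ k and z'·γ_1γ_2⋯γ_i = μ_1⋯μ_i · γ_1γ_2⋯γ_i·z' for z' ∈ {z, τ(z)} and i = 1,…,k; (iii) ∂_i(z) = 0 for i ≤ k and γ_1⋯γ_{i-1}(z'γ_i - μ_iγ_i z') = 0 for z' ∈ {z, τ(z)} and i = 1,…,k. -/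
import Mathlib


noncomputable section

namespace FRT

/-- The "dual" index `i' = N+1-i` (0-indexed: `N-1-i`). -/
def dual {N : ℕ} (i : Fin N) : Fin N := ⟨N - 1 - i.val, by have := i.2; omega⟩

/-- Generators of the free algebra. -/
def gen {N : ℕ} (i : Fin N) : FreeAlgebra ℂ (Fin N) := FreeAlgebra.ι ℂ i

/-- The sum `∑_{k<i} q^{2k-2i+2} γ_k γ_{k'}` appearing in the defining relations. -/
def pairSum (N : ℕ) (q : ℂ) (i : Fin N) : FreeAlgebra ℂ (Fin N) :=
  ∑ k ∈ Finset.Iio i, (q ^ (2 * (k.val : ℤ) - 2 * (i.val : ℤ) + 2)) • (gen k * gen (dual k))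

/-- The defining relations of the FRT–Clifford algebra `Cl_N(q,c)`. -/
inductive Rel (N : ℕ) (q c : ℂ) : FreeAlgebra ℂ (Fin N) → FreeAlgebra ℂ (Fin N) → Prop
  | sq (i : Fin N) (h : 2 * i.val + 1 ≠ N) : Rel N q c (gen i * gen i) 0
  | swap (i j : Fin N) (hlt : i < j) (h : i.val + j.val + 1 ≠ N) :
      Rel N q c (gen j * gen i) ((-(q ^ 2)) • (gen i * gen j))
  | pair (i : Fin N) (h : 2 * i.val + 1 < N) :
      Rel N q c (gen (dual i) * gen i)
        (-(gen i * gen (dual i)) + (q ^ 2 - q⁻¹ ^ 2) • pairSum N q i +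
          algebraMap ℂ _ (c ^ 2 * q ^ ((N : ℤ) - 2 * (i.val : ℤ) - 1) * (q + q⁻¹)))
  | middle (i : Fin N) (h : 2 * i.val + 1 = N) :
      Rel N q c (gen i * gen i) ((q - q⁻¹) • pairSum N q i + algebraMap ℂ _ (c ^ 2))

/-- The FRT–Clifford algebra `Cl_N(q,c)`. -/
abbrev Cl (N : ℕ) (q c : ℂ) := RingQuot (Rel N q c)

/-- The generators `γ_i` of `Cl_N(q,c)`. -/
def γ (N : ℕ) (q c : ℂ) (i : Fin N) : Cl N q c :=
  RingQuot.mkAlgHom ℂ (Rel N q c) (gen i)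

/-- Ordered product `γ_1 γ_2 ⋯ γ_m` of the first `m` generators. -/
def prodFirst (N : ℕ) (q c : ℂ) (m : ℕ) : Cl N q c :=
  (((List.finRange N).take m).map (γ N q c)).prod

/-- Ordered product `γ_{m+1} γ_{m+2} ⋯ γ_N` (0-indexed: indices `m,…,N-1`). -/
def prodFrom (N : ℕ) (q c : ℂ) (m : ℕ) : Cl N q c :=
  (((List.finRange N).drop m).map (γ N q c)).prod

/-- The ordered monomial `γ_1^{i_1} ⋯ γ_N^{i_N}` for `i ∈ {0,1}^N`. -/
def monoB (N : ℕ) (q c : ℂ) (f : Fin N → Bool) : Cl N q c :=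
  ((List.finRange N).map (fun i => if f i then γ N q c i else 1)).prod

/-- The ordered monomial `γ_1^{i_1} ⋯ γ_n^{i_n}` for `i ∈ {0,1}^n`, `n ≤ N`. -/
def monoLow (N : ℕ) (q c : ℂ) {n : ℕ} (h : n ≤ N) (f : Fin n → Bool) : Cl N q c :=
  ((List.finRange n).map (fun j => if f j then γ N q c (Fin.castLE h j) else 1)).prod

/-- `z` is homogeneous of `∂_i`-degree `0`: it is fixed by every algebra endomorphism
rescaling `γ_i` by `t` and `γ_{i'}` by `t⁻¹`. -/
def DegZeroAt (N : ℕ) (q c : ℂ) (i : ℕ) (z : Cl N q c) : Prop :=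
  ∀ t : ℂ, t ≠ 0 → ∀ f : Cl N q c →ₐ[ℂ] Cl N q c,
    (∀ j : Fin N, f (γ N q c j) =
      (if j.val = i then t else if j.val + i + 1 = N then t⁻¹ else 1) • γ N q c j) →
    f z = z

variable {N : ℕ} {q c : ℂ}

lemma cl_induction {P : Cl N q c → Prop}
    (halg : ∀ r : ℂ, P (algebraMap ℂ _ r))
    (hγ : ∀ i, P (γ N q c i))
    (hadd : ∀ a b, P a → P b → P (a + b))
    (hmul : ∀ a b, P a → P b → P (a * b)) : ∀ a, P a := by
  have htop : ∀ a : Cl N q c, a ∈ Algebra.adjoin ℂ (Set.range (γ N q c)) := by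
    intro a
    obtain ⟨b, rfl⟩ := RingQuot.mkAlgHom_surjective ℂ (Rel N q c) a
    have hb : b ∈ (⊤ : Subalgebra ℂ (FreeAlgebra ℂ (Fin N))) := trivial
    rw [← FreeAlgebra.adjoin_range_ι ℂ] at hb
    have hmem : RingQuot.mkAlgHom ℂ (Rel N q c) b ∈
        Subalgebra.map (RingQuot.mkAlgHom ℂ (Rel N q c))
          (Algebra.adjoin ℂ (Set.range (FreeAlgebra.ι ℂ : Fin N → _))) :=
      Subalgebra.mem_map.mpr ⟨b, hb, rfl⟩
    rw [AlgHom.map_adjoin, ← Set.range_comp] at hmem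
    exact hmem
  intro a
  exact Algebra.adjoin_induction (fun x hx => by obtain ⟨i, rfl⟩ := hx; exact hγ i)
    halg (fun x y _ _ => hadd x y) (fun x y _ _ => hmul x y) (htop a)

def PS (N : ℕ) (q c : ℂ) (i : Fin N) : Cl N q c :=
  ∑ l ∈ Finset.Iio i, (q ^ (2 * (l.val : ℤ) - 2 * (i.val : ℤ) + 2)) •
    (γ N q c l * γ N q c (dual l))

lemma gamma_sq (i : Fin N) (h : 2 * i.val + 1 ≠ N) : γ N q c i * γ N q c i = 0 := by
  have := RingQuot.mkAlgHom_rel ℂ (Rel.sq (q := q) (c := c) i h)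
  simp only [map_mul, map_zero] at this
  simp only [γ]
  exact this

lemma gamma_swap (i j : Fin N) (hlt : i < j) (h : i.val + j.val + 1 ≠ N) :
    γ N q c j * γ N q c i = (-(q ^ 2)) • (γ N q c i * γ N q c j) := by
  have := RingQuot.mkAlgHom_rel ℂ (Rel.swap (q := q) (c := c) i j hlt h)
  simp only [map_mul, map_smul] at this
  simp only [γ]
  exact this

lemma gamma_pair (i : Fin N) (h : 2 * i.val + 1 < N) :
    γ N q c (dual i) * γ N q c i =
      -(γ N q c i * γ N q c (dual i)) + (q ^ 2 - q⁻¹ ^ 2) • PS N q c i +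
        algebraMap ℂ _ (c ^ 2 * q ^ ((N : ℤ) - 2 * (i.val : ℤ) - 1) * (q + q⁻¹)) := by
  have := RingQuot.mkAlgHom_rel ℂ (Rel.pair (q := q) (c := c) i h)
  simp only [pairSum, map_mul, map_smul, map_add, map_neg, map_sum, AlgHom.commutes] at this
  simp only [γ, PS, pairSum, map_mul, map_smul, map_add, map_neg, map_sum, AlgHom.commutes]
  exact this

lemma prodFirst_zero : prodFirst N q c 0 = 1 := by simp [prodFirst]

lemma prodFirst_succ (m : ℕ) (hm : m < N) :
    prodFirst N q c (m + 1) = prodFirst N q c m * γ N q c ⟨m, hm⟩ := by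
  rw [prodFirst, prodFirst, List.take_succ]
  simp [List.getElem?_eq_getElem, hm]


-- ## Part 2 : commutation machinery

def Ael (N : ℕ) (q c : ℂ) (i : Fin N) : Cl N q c :=
  γ N q c (dual i) * γ N q c i + γ N q c i * γ N q c (dual i)

def xel (N : ℕ) (q c : ℂ) (i : Fin N) : Cl N q c := γ N q c i * γ N q c (dual i)

lemma gamma_swap' (i j : Fin N) (hq : q ≠ 0) (hlt : i < j) (h : i.val + j.val + 1 ≠ N) :
    γ N q c i * γ N q c j = (-(q⁻¹ ^ 2)) • (γ N q c j * γ N q c i) := by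
  rw [gamma_swap i j hlt h, smul_smul, show (-(q⁻¹^2)) * (-(q^2)) = 1 by field_simp, one_smul]

lemma mul_comm_smul {a b u : Cl N q c} {s t : ℂ} (h1 : a * u = s • (u * a))
    (h2 : b * u = t • (u * b)) : (a * b) * u = (s * t) • (u * (a * b)) := by
  calc a * b * u = a * (b * u) := by rw [mul_assoc]
  _ = t • (a * u * b) := by rw [h2, mul_smul_comm, mul_assoc]
  _ = t • (s • (u * a * b)) := by rw [h1, smul_mul_assoc, mul_assoc]
  _ = (s*t) • (u * (a*b)) := by rw [smul_smul, mul_comm t s, mul_assoc]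

lemma A_comm_gen {i : Fin N} {u : Cl N q c} {s t : ℂ}
    (he : γ N q c i * u = s • (u * γ N q c i))
    (hf : γ N q c (dual i) * u = t • (u * γ N q c (dual i))) :
    Ael N q c i * u = (s * t) • (u * Ael N q c i) := by
  rw [Ael, add_mul, mul_comm_smul hf he, mul_comm_smul he hf, mul_add, smul_add,
    mul_comm t s]

lemma inv_comm {A B u : Cl N q c} (h1 : A*B = 1) (h2 : B*A = 1) (h : A*u = u*A) :
    B*u = u*B := by
  calc B*u = B*(u*(A*B)) := by rw [h1, mul_one]
  _ = B*((u*A)*B) := by rw [mul_assoc u A B]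
  _ = B*((A*u)*B) := by rw [h]
  _ = (B*A)*(u*B) := by noncomm_ring
  _ = u*B := by rw [h2, one_mul]

lemma inv_comm_smul {A B u : Cl N q c} {s : ℂ} (hs : s ≠ 0) (h1 : A*B = 1) (h2 : B*A = 1)
    (h : A*u = s • (u*A)) : B*u = s⁻¹ • (u*B) := by
  have hu : u*A = s⁻¹ • (A*u) := by rw [h, smul_smul, inv_mul_cancel₀ hs, one_smul]
  calc B*u = B*(u*(A*B)) := by rw [h1, mul_one]
  _ = B*((u*A)*B) := by rw [mul_assoc u A B]
  _ = s⁻¹ • (B*((A*u)*B)) := by rw [hu]; simp only [mul_smul_comm, smul_mul_assoc]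
  _ = s⁻¹ • ((B*A)*(u*B)) := by congr 1; noncomm_ring
  _ = s⁻¹ • (u*B) := by rw [h2, one_mul]

section GoodIndex
variable (hq : q ≠ 0) {i : Fin N} (hi : 2 * i.val + 1 < N)

lemma dual_val (i : Fin N) : (dual i).val = N - 1 - i.val := rfl

include hi in
lemma e_sq : γ N q c i * γ N q c i = 0 := gamma_sq i (by omega)

include hi in
lemma f_sq : γ N q c (dual i) * γ N q c (dual i) = 0 :=
  gamma_sq (dual i) (by simp only [dual_val]; omega)

include hi in
lemma e_comm_low {m : Fin N} (hm : m.val < i.val) :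
    γ N q c i * γ N q c m = (-(q^2)) • (γ N q c m * γ N q c i) :=
  gamma_swap m i (by simp only [Fin.lt_def]; omega) (by omega)

include hi in
lemma f_comm_low {m : Fin N} (hm : m.val < i.val) :
    γ N q c (dual i) * γ N q c m = (-(q^2)) • (γ N q c m * γ N q c (dual i)) :=
  gamma_swap m (dual i) (by simp only [Fin.lt_def, dual_val]; omega) (by simp only [dual_val]; omega)

include hi hq in
lemma e_comm_mid {m : Fin N} (h1 : i.val < m.val) (h2 : m.val < (dual i).val) :
    γ N q c i * γ N q c m = (-(q⁻¹^2)) • (γ N q c m * γ N q c i) :=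
  gamma_swap' i m hq (by simp only [Fin.lt_def]; omega) (by simp only [dual_val] at h2; omega)

include hi in
lemma f_comm_mid {m : Fin N} (h1 : i.val < m.val) (h2 : m.val < (dual i).val) :
    γ N q c (dual i) * γ N q c m = (-(q^2)) • (γ N q c m * γ N q c (dual i)) :=
  gamma_swap m (dual i) (by simp only [Fin.lt_def]; omega) (by simp only [dual_val]; omega)

include hi hq in
lemma e_comm_high {m : Fin N} (hm : (dual i).val < m.val) :
    γ N q c i * γ N q c m = (-(q⁻¹^2)) • (γ N q c m * γ N q c i) :=
  gamma_swap' i m hq (by simp only [Fin.lt_def, dual_val] at *; omega)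
    (by simp only [dual_val] at hm; omega)

include hi hq in
lemma f_comm_high {m : Fin N} (hm : (dual i).val < m.val) :
    γ N q c (dual i) * γ N q c m = (-(q⁻¹^2)) • (γ N q c m * γ N q c (dual i)) :=
  gamma_swap' (dual i) m hq (by simp only [Fin.lt_def]; omega) (by simp only [dual_val] at *; omega)

include hi in
lemma A_comm_low {m : Fin N} (hm : m.val < i.val) :
    Ael N q c i * γ N q c m = (q^4) • (γ N q c m * Ael N q c i) := by
  rw [A_comm_gen (e_comm_low hi hm) (f_comm_low hi hm), show (-(q^2)) * (-(q^2)) = q^4 by ring]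

include hi hq in
lemma A_comm_mid {m : Fin N} (h1 : i.val < m.val) (h2 : m.val < (dual i).val) :
    Ael N q c i * γ N q c m = γ N q c m * Ael N q c i := by
  rw [A_comm_gen (e_comm_mid hq hi h1 h2) (f_comm_mid hi h1 h2),
    show (-(q⁻¹^2)) * (-(q^2)) = 1 by field_simp, one_smul]

include hi hq in
lemma A_comm_high {m : Fin N} (hm : (dual i).val < m.val) :
    Ael N q c i * γ N q c m = (q⁻¹^4) • (γ N q c m * Ael N q c i) := by
  rw [A_comm_gen (e_comm_high hq hi hm) (f_comm_high hq hi hm),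
    show (-(q⁻¹^2)) * (-(q⁻¹^2)) = q⁻¹^4 by ring]

include hi in
lemma e_mul_e_mul (w : Cl N q c) : γ N q c i * (γ N q c i * w) = 0 := by
  rw [← mul_assoc, e_sq hi, zero_mul]

include hi in
lemma f_mul_f_mul (w : Cl N q c) : γ N q c (dual i) * (γ N q c (dual i) * w) = 0 := by
  rw [← mul_assoc, f_sq hi, zero_mul]

include hi in
lemma A_comm_e : Ael N q c i * γ N q c i = γ N q c i * Ael N q c i := by
  simp only [Ael, add_mul, mul_add, mul_assoc, e_sq hi, e_mul_e_mul hi, mul_zero, add_zero,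
    zero_add, zero_mul]
  try abel

include hi in
lemma A_comm_f : Ael N q c i * γ N q c (dual i) = γ N q c (dual i) * Ael N q c i := by
  simp only [Ael, add_mul, mul_add, mul_assoc, f_sq hi, f_mul_f_mul hi, mul_zero, zero_add,
    add_zero, zero_mul]
  try abel

include hi in
lemma x_sq : xel N q c i * xel N q c i = Ael N q c i * xel N q c i := by
  simp only [xel, Ael, add_mul, mul_assoc, e_mul_e_mul hi, mul_zero, zero_add, add_zero,
    zero_mul]
  try abel

include hi in
lemma A_comm_x : Ael N q c i * xel N q c i = xel N q c i * Ael N q c i := by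
  simp only [xel, Ael, add_mul, mul_add, mul_assoc, e_mul_e_mul hi, f_mul_f_mul hi,
    mul_zero, zero_add, add_zero, zero_mul]
  try abel

end GoodIndex

-- ## Part 3 : invertibility of Ael

lemma A_form {i : Fin N} (hi : 2 * i.val + 1 < N) :
    Ael N q c i = (q ^ 2 - q⁻¹ ^ 2) • PS N q c i +
      algebraMap ℂ _ (c ^ 2 * q ^ ((N : ℤ) - 2 * (i.val : ℤ) - 1) * (q + q⁻¹)) := by
  rw [Ael, gamma_pair i hi]; abel

lemma Iio_zero_fin (h : 0 < N) : Finset.Iio (⟨0, h⟩ : Fin N) = ∅ := by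
  ext l; simp [Finset.mem_Iio, Fin.lt_def]

lemma Iio_succ_fin (j : ℕ) (h : j + 1 < N) :
    Finset.Iio (⟨j+1, h⟩ : Fin N) = insert ⟨j, by omega⟩ (Finset.Iio ⟨j, by omega⟩) := by
  ext l; simp only [Finset.mem_Iio, Finset.mem_insert, Fin.lt_def, Fin.ext_iff]; omega

lemma PS_zero (h : 0 < N) : PS N q c ⟨0, h⟩ = 0 := by
  rw [PS, Iio_zero_fin h, Finset.sum_empty]

lemma zpow_neg_two (hq : q ≠ 0) : q ^ (-2 : ℤ) = q⁻¹ ^ 2 := by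
  rw [zpow_neg, show (2:ℤ) = ((2:ℕ):ℤ) from rfl, zpow_natCast, ← inv_pow]

lemma PS_succ (j : ℕ) (h : j + 1 < N) (hq : q ≠ 0) :
    PS N q c ⟨j+1, h⟩ = xel N q c ⟨j, by omega⟩ + (q⁻¹^2) • PS N q c ⟨j, by omega⟩ := by
  rw [PS, Iio_succ_fin j h, Finset.sum_insert (by simp [Finset.mem_Iio])]
  congr 1
  · show (q ^ (2 * (j : ℤ) - 2 * ((j+1 : ℕ) : ℤ) + 2)) • _ = _
    rw [show (2 * (j : ℤ) - 2 * ((j+1 : ℕ) : ℤ) + 2) = 0 by push_cast; ring, zpow_zero,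
      one_smul, xel]
  · rw [PS, Finset.smul_sum]
    apply Finset.sum_congr rfl; intro l hl
    rw [smul_smul]; congr 1
    rw [show (2 * (l.val : ℤ) - 2 * ((j+1 : ℕ) : ℤ) + 2) =
      (-2) + (2 * (l.val : ℤ) - 2 * (j : ℤ) + 2) by push_cast; ring,
      zpow_add₀ hq, zpow_neg_two hq]

lemma A_rec (j : ℕ) (h : 2 * (j + 1) + 1 < N) (hq : q ≠ 0) :
    Ael N q c ⟨j+1, by omega⟩ = (q⁻¹^2) • Ael N q c ⟨j, by omega⟩ +
      (q^2 - q⁻¹^2) • xel N q c ⟨j, by omega⟩ := by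
  have hκ : c ^ 2 * q ^ ((N : ℤ) - 2 * (((j+1:ℕ) : ℤ)) - 1) * (q + q⁻¹) =
      q⁻¹^2 * (c ^ 2 * q ^ ((N : ℤ) - 2 * ((j:ℕ) : ℤ) - 1) * (q + q⁻¹)) := by
    rw [show ((N : ℤ) - 2 * (((j+1:ℕ)) : ℤ) - 1) = (-2) + ((N : ℤ) - 2 * ((j:ℕ) : ℤ) - 1) by
      push_cast; ring, zpow_add₀ hq, zpow_neg_two hq]
    ring
  rw [A_form (i := ⟨j+1, by omega⟩) (by simpa using h),
    A_form (i := ⟨j, by omega⟩) (by simp; omega), PS_succ j (by omega) hq]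
  show _ • (_ + _) + algebraMap ℂ _ (c ^ 2 * q ^ ((N : ℤ) - 2 * (((j+1:ℕ)) : ℤ) - 1) * (q + q⁻¹)) = _
  rw [hκ]
  simp only [Algebra.algebraMap_eq_smul_one, smul_add, smul_smul]
  match_scalars <;> ring

lemma A_inv (j : ℕ) (hj : 2 * j + 1 < N) (hq : q ≠ 0) (hq2 : q + q⁻¹ ≠ 0) (hc : c ≠ 0) :
    ∃ B : Cl N q c, Ael N q c ⟨j, by omega⟩ * B = 1 ∧ B * Ael N q c ⟨j, by omega⟩ = 1 := by
  induction j with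
  | zero =>
      have hκ0 : (c ^ 2 * q ^ ((N : ℤ) - 2 * (((⟨0, by omega⟩ : Fin N)).val : ℤ) - 1) *
          (q + q⁻¹)) ≠ 0 :=
        mul_ne_zero (mul_ne_zero (pow_ne_zero 2 hc) (zpow_ne_zero _ hq)) hq2
      refine ⟨algebraMap ℂ _ (c ^ 2 * q ^ ((N : ℤ) - 2 * (((⟨0, by omega⟩ : Fin N)).val : ℤ) - 1) *
          (q + q⁻¹))⁻¹, ?_, ?_⟩
      · rw [A_form (by simp; omega), PS_zero (by omega), smul_zero, zero_add, ← map_mul,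
          mul_inv_cancel₀ hκ0, map_one]
      · rw [A_form (by simp; omega), PS_zero (by omega), smul_zero, zero_add, ← map_mul,
          inv_mul_cancel₀ hκ0, map_one]
  | succ m IH =>
      obtain ⟨B, hB1, hB2⟩ := IH (by omega)
      set A : Cl N q c := Ael N q c ⟨m, by omega⟩ with hA
      set A1 : Cl N q c := Ael N q c ⟨m+1, by omega⟩ with hA1
      set x : Cl N q c := xel N q c ⟨m, by omega⟩ with hx
      have hrec : A1 = (q⁻¹^2) • A + (q^2 - q⁻¹^2) • x := A_rec m (by omega) hq
      have hAx : A * x = x * A := A_comm_x (by simp; omega)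
      have hxx : x * x = A * x := x_sq (by simp; omega)
      have hcommA : A1 * A = A * A1 := by
        rw [hrec, add_mul, mul_add, smul_mul_assoc, smul_mul_assoc, mul_smul_comm,
          mul_smul_comm, hAx]
      have quad : A1 * A1 = (q^2 + q⁻¹^2) • (A * A1) - A * A := by
        rw [hrec]
        simp only [mul_add, add_mul, smul_mul_assoc, mul_smul_comm, smul_smul, smul_add,
          smul_sub, hxx]
        rw [show x * A = A * x from hAx.symm]
        match_scalars <;> field_simp <;> ring
      have hBA1 : B * A1 = A1 * B := inv_comm hB1 hB2 hcommA.symm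
      have hmov : ∀ w : Cl N q c, A1 * (B * w) = B * (A1 * w) := fun w => by
        rw [← mul_assoc, ← hBA1, mul_assoc]
      refine ⟨B * (B * ((q^2 + q⁻¹^2) • A - A1)), ?_, ?_⟩
      · have inner : A1 * ((q^2 + q⁻¹^2) • A - A1) = A * A := by
          rw [mul_sub, mul_smul_comm, hcommA, quad]; abel
        calc A1 * (B * (B * ((q^2 + q⁻¹^2) • A - A1)))
            = B * (B * (A1 * ((q^2 + q⁻¹^2) • A - A1))) := by
              rw [hmov, hmov]
        _ = B * (B * (A * A)) := by rw [inner]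
        _ = B * ((B * A) * A) := by rw [mul_assoc]
        _ = 1 := by rw [hB2, one_mul, hB2]
      · have inner : ((q^2 + q⁻¹^2) • A - A1) * A1 = A * A := by
          rw [sub_mul, smul_mul_assoc, quad]; abel
        calc (B * (B * ((q^2 + q⁻¹^2) • A - A1))) * A1
            = B * (B * (((q^2 + q⁻¹^2) • A - A1) * A1)) := by
              rw [mul_assoc, mul_assoc]
        _ = B * (B * (A * A)) := by rw [inner]
        _ = B * ((B * A) * A) := by rw [mul_assoc]
        _ = 1 := by rw [hB2, one_mul, hB2]

-- ## Part 4 : peel machinery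

lemma comm_prodFirst {y : Cl N q c} {s : ℕ → ℂ} (m : ℕ) (hm : m ≤ N)
    (h : ∀ l (hl : l < m), y * γ N q c ⟨l, by omega⟩ = s l • (γ N q c ⟨l, by omega⟩ * y)) :
    y * prodFirst N q c m = (∏ l ∈ Finset.range m, s l) • (prodFirst N q c m * y) := by
  induction m with
  | zero => simp [prodFirst_zero]
  | succ d IH =>
      rw [prodFirst_succ d (by omega), ← mul_assoc,
        IH (by omega) (fun l hl => h l (by omega)), Finset.prod_range_succ,
        smul_mul_assoc, mul_assoc, h d (by omega), mul_smul_comm, smul_smul, mul_assoc]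

/-- `f' z' = α (z' f')`, `f' g = s (g f')` imply the same conjugation rule for
`z' g - β (g z')`. -/
lemma conj_rel {g f' z' : Cl N q c} {α β s : ℂ} (h1 : f' * z' = α • (z' * f'))
    (h2 : f' * g = s • (g * f')) :
    f' * (z' * g - β • (g * z')) = (s * α) • ((z' * g - β • (g * z')) * f') := by
  have hz : ∀ X : Cl N q c, f' * (z' * X) = α • (z' * (f' * X)) := fun X => by
    rw [← mul_assoc, h1, smul_mul_assoc, mul_assoc]
  have hg : ∀ X : Cl N q c, f' * (g * X) = s • (g * (f' * X)) := fun X => by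
    rw [← mul_assoc, h2, smul_mul_assoc, mul_assoc]
  rw [mul_sub, mul_smul_comm, hz g, hg z', h1, h2]
  simp only [sub_mul, smul_sub, smul_smul, mul_smul_comm, smul_mul_assoc, mul_assoc]
  match_scalars <;> ring

/-- commutation version. -/
lemma comm_rel {g a z' : Cl N q c} {β : ℂ} (h1 : a * z' = z' * a) (h2 : a * g = g * a) :
    a * (z' * g - β • (g * z')) = (z' * g - β • (g * z')) * a := by
  have hz : ∀ X : Cl N q c, a * (z' * X) = z' * (a * X) := fun X => by
    rw [← mul_assoc, h1, mul_assoc]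
  have hg : ∀ X : Cl N q c, a * (g * X) = g * (a * X) := fun X => by
    rw [← mul_assoc, h2, mul_assoc]
  rw [mul_sub, mul_smul_comm, hz g, hg z', h1, h2]
  simp only [sub_mul, smul_mul_assoc, mul_assoc]

/-- `z'` commuting suitably with `e,f` commutes with `Ael`. -/
lemma A_comm_z {i : Fin N} {z' : Cl N q c} {μi : ℂ} (hμ : μi ≠ 0)
    (he : z' * γ N q c i = μi • (γ N q c i * z'))
    (hf : γ N q c (dual i) * z' = μi • (z' * γ N q c (dual i))) :
    Ael N q c i * z' = z' * Ael N q c i := by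
  have he' : γ N q c i * z' = μi⁻¹ • (z' * γ N q c i) := by
    rw [he, smul_smul, inv_mul_cancel₀ hμ, one_smul]
  have t1 : ∀ X : Cl N q c, γ N q c (dual i) * (z' * X) =
      μi • (z' * (γ N q c (dual i) * X)) := fun X => by
    rw [← mul_assoc, hf, smul_mul_assoc, mul_assoc]
  have t2 : ∀ X : Cl N q c, γ N q c i * (z' * X) =
      μi⁻¹ • (z' * (γ N q c i * X)) := fun X => by
    rw [← mul_assoc, he', smul_mul_assoc, mul_assoc]
  rw [Ael, add_mul, mul_add, mul_assoc, mul_assoc]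
  rw [he', mul_smul_comm, t1 (γ N q c i), smul_smul, inv_mul_cancel₀ hμ, one_smul]
  rw [hf, mul_smul_comm, t2 (γ N q c (dual i)), smul_smul, mul_inv_cancel₀ hμ, one_smul]

/-- The peeling lemma: if `w` conjugates suitably with the `γ_{l'}` and commutes with the
`Ael l` for `l` below `i`, and `γ_1⋯γ_i w = 0`, then `w = 0`. -/
lemma peel (hq : q ≠ 0) (hq2 : q + q⁻¹ ≠ 0) (hc : c ≠ 0) {kk : ℕ} (hkN : 2 * kk ≤ N)
    (μ : ℕ → ℂ) (w : Cl N q c) (i : ℕ) (hi : i < kk)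
    (hfw : ∀ j (hj : j < i),
      γ N q c (dual ⟨j, by omega⟩) * w = (-(q^2) * μ j) • (w * γ N q c (dual ⟨j, by omega⟩)))
    (hAw : ∀ j (hj : j < i), Ael N q c ⟨j, by omega⟩ * w = w * Ael N q c ⟨j, by omega⟩)
    (h0 : prodFirst N q c i * w = 0) : w = 0 := by
  have step : ∀ m, m < i → prodFirst N q c (m+1) * w = 0 → prodFirst N q c m * w = 0 := by
    intro m hm hP
    have hmN : 2 * m + 1 < N := by omega
    set Fm : Fin N := ⟨m, by omega⟩ with hFm
    have hfP : γ N q c (dual Fm) * prodFirst N q c m =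
        ((-(q^2))^m) • (prodFirst N q c m * γ N q c (dual Fm)) := by
      have := comm_prodFirst (y := γ N q c (dual Fm)) (s := fun _ => -(q^2)) m (by omega)
        (fun l hl => f_comm_low (i := Fm) hmN (by simpa using hl))
      simpa [Finset.prod_const] using this
    have hPe : prodFirst N q c m * (γ N q c Fm * w) = 0 := by
      rw [← mul_assoc, ← prodFirst_succ m (by omega), hP]
    have h1 : γ N q c (dual Fm) * (prodFirst N q c m * (γ N q c Fm * w)) = 0 := by
      rw [hPe, mul_zero]
    rw [← mul_assoc, hfP, smul_mul_assoc, mul_assoc] at h1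
    have h2 : prodFirst N q c m * (γ N q c (dual Fm) * (γ N q c Fm * w)) = 0 := by
      have hne : ((-(q^2)) : ℂ)^m ≠ 0 := pow_ne_zero _ (by simp [hq])
      exact (smul_eq_zero.mp h1).resolve_left hne
    have hfe : γ N q c (dual Fm) * γ N q c Fm = Ael N q c Fm - γ N q c Fm * γ N q c (dual Fm) := by
      rw [Ael]; abel
    rw [← mul_assoc (γ N q c (dual Fm)), hfe, sub_mul, mul_sub] at h2
    have h3 : prodFirst N q c m * (γ N q c Fm * γ N q c (dual Fm) * w) = 0 := by
      calc prodFirst N q c m * (γ N q c Fm * γ N q c (dual Fm) * w)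
          = prodFirst N q c m * (γ N q c Fm * (γ N q c (dual Fm) * w)) := by
            rw [mul_assoc (γ N q c Fm)]
      _ = (-(q^2) * μ m) • (prodFirst N q c m * (γ N q c Fm * (w * γ N q c (dual Fm)))) := by
            rw [hfw m hm, mul_smul_comm, mul_smul_comm]
      _ = (-(q^2) * μ m) • ((prodFirst N q c m * (γ N q c Fm * w)) * γ N q c (dual Fm)) := by
            rw [← mul_assoc (γ N q c Fm) w, ← mul_assoc]
      _ = 0 := by rw [hPe, zero_mul, smul_zero]
    rw [h3, sub_zero] at h2
    rw [hAw m hm, ← mul_assoc] at h2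
    obtain ⟨B, hB1, hB2⟩ := A_inv m hmN hq hq2 hc
    calc prodFirst N q c m * w
        = prodFirst N q c m * w * (Ael N q c ⟨m, by omega⟩ * B) := by rw [hB1, mul_one]
    _ = (prodFirst N q c m * w * Ael N q c ⟨m, by omega⟩) * B := (mul_assoc _ _ _).symm
    _ = 0 := by rw [h2, zero_mul]
  have hdesc : ∀ d, d ≤ i → prodFirst N q c (i - d) * w = 0 := by
    intro d
    induction d with
    | zero => intro _; simpa using h0
    | succ e IHe =>
        intro he
        have h1 := IHe (by omega)
        have : i - e = (i - (e+1)) + 1 := by omega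
        rw [this] at h1
        exact step (i - (e+1)) (by omega) h1
  have := hdesc i (le_refl i)
  simpa [prodFirst_zero] using this


-- ## Part 5 : the idempotent and rescaling automorphisms

section Pel
variable (hq : q ≠ 0) {i : Fin N} (hi : 2 * i.val + 1 < N) {B : Cl N q c}
  (hB1 : Ael N q c i * B = 1) (hB2 : B * Ael N q c i = 1)

include hi in
lemma x_mul_e : xel N q c i * γ N q c i = Ael N q c i * γ N q c i := by
  simp only [xel, Ael, add_mul, mul_assoc, e_sq hi, mul_zero, zero_add]

include hi in
lemma f_mul_x : γ N q c (dual i) * xel N q c i = γ N q c (dual i) * Ael N q c i := by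
  simp only [xel, Ael, mul_add, f_mul_f_mul hi, zero_add]

include hi in
lemma e_mul_x : γ N q c i * xel N q c i = 0 := by
  rw [xel]; exact e_mul_e_mul hi _

include hi in
lemma x_mul_f : xel N q c i * γ N q c (dual i) = 0 := by
  rw [xel, mul_assoc, f_sq hi, mul_zero]

include hi hB1 hB2 in
lemma pel_e : (xel N q c i * B) * γ N q c i = γ N q c i := by
  calc xel N q c i * B * γ N q c i = xel N q c i * (B * γ N q c i) := mul_assoc _ _ _
  _ = xel N q c i * (γ N q c i * B) := by rw [inv_comm hB1 hB2 (A_comm_e hi)]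
  _ = (xel N q c i * γ N q c i) * B := (mul_assoc _ _ _).symm
  _ = (Ael N q c i * γ N q c i) * B := by rw [x_mul_e hi]
  _ = (γ N q c i * Ael N q c i) * B := by rw [A_comm_e hi]
  _ = γ N q c i * (Ael N q c i * B) := mul_assoc _ _ _
  _ = γ N q c i := by rw [hB1, mul_one]

include hi in
lemma e_pel : γ N q c i * (xel N q c i * B) = 0 := by
  rw [← mul_assoc, e_mul_x hi, zero_mul]

include hi hB1 hB2 in
lemma pel_f : (xel N q c i * B) * γ N q c (dual i) = 0 := by
  calc xel N q c i * B * γ N q c (dual i) = xel N q c i * (B * γ N q c (dual i)) := mul_assoc _ _ _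
  _ = xel N q c i * (γ N q c (dual i) * B) := by rw [inv_comm hB1 hB2 (A_comm_f hi)]
  _ = (xel N q c i * γ N q c (dual i)) * B := (mul_assoc _ _ _).symm
  _ = 0 := by rw [x_mul_f hi, zero_mul]

include hi hB1 hB2 in
lemma f_pel : γ N q c (dual i) * (xel N q c i * B) = γ N q c (dual i) := by
  calc γ N q c (dual i) * (xel N q c i * B) = (γ N q c (dual i) * xel N q c i) * B :=
        (mul_assoc _ _ _).symm
  _ = (γ N q c (dual i) * Ael N q c i) * B := by rw [f_mul_x hi]
  _ = (Ael N q c i * γ N q c (dual i)) * B := by rw [← A_comm_f hi]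
  _ = Ael N q c i * (γ N q c (dual i) * B) := mul_assoc _ _ _
  _ = Ael N q c i * (B * γ N q c (dual i)) := by rw [inv_comm hB1 hB2 (A_comm_f hi)]
  _ = (Ael N q c i * B) * γ N q c (dual i) := (mul_assoc _ _ _).symm
  _ = γ N q c (dual i) := by rw [hB1, one_mul]

include hi hB1 hB2 in
lemma pel_sq : (xel N q c i * B) * (xel N q c i * B) = xel N q c i * B := by
  have hBx : B * xel N q c i = xel N q c i * B := inv_comm hB1 hB2 (A_comm_x hi)
  calc xel N q c i * B * (xel N q c i * B)
      = xel N q c i * (B * (xel N q c i * B)) := mul_assoc _ _ _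
  _ = xel N q c i * ((B * xel N q c i) * B) := by rw [mul_assoc B]
  _ = xel N q c i * ((xel N q c i * B) * B) := by rw [hBx]
  _ = xel N q c i * (xel N q c i * (B * B)) := by rw [mul_assoc (xel N q c i) B B]
  _ = (xel N q c i * xel N q c i) * (B * B) := (mul_assoc _ _ _).symm
  _ = (Ael N q c i * xel N q c i) * (B * B) := by rw [x_sq hi]
  _ = (xel N q c i * Ael N q c i) * (B * B) := by rw [A_comm_x hi]
  _ = xel N q c i * ((Ael N q c i * B) * B) := by
        rw [mul_assoc (xel N q c i), mul_assoc (Ael N q c i)]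
  _ = xel N q c i * B := by rw [hB1, one_mul]

include hi hB1 hB2 in
lemma pel_comm_of {m : Fin N} {σ : ℂ} (hσ : σ ≠ 0)
    (hxm : xel N q c i * γ N q c m = σ • (γ N q c m * xel N q c i))
    (hAm : Ael N q c i * γ N q c m = σ • (γ N q c m * Ael N q c i)) :
    (xel N q c i * B) * γ N q c m = γ N q c m * (xel N q c i * B) := by
  have hBm := inv_comm_smul hσ hB1 hB2 hAm
  calc xel N q c i * B * γ N q c m = xel N q c i * (B * γ N q c m) := mul_assoc _ _ _
  _ = σ⁻¹ • (xel N q c i * (γ N q c m * B)) := by rw [hBm, mul_smul_comm]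
  _ = σ⁻¹ • ((xel N q c i * γ N q c m) * B) := by rw [mul_assoc]
  _ = σ⁻¹ • (σ • ((γ N q c m * xel N q c i) * B)) := by rw [hxm, smul_mul_assoc]
  _ = γ N q c m * (xel N q c i * B) := by
        rw [smul_smul, inv_mul_cancel₀ hσ, one_smul, mul_assoc]

include hq hi hB1 hB2 in
lemma pel_comm_γ {m : Fin N} (h1 : m.val ≠ i.val) (h2 : m.val ≠ (dual i).val) :
    (xel N q c i * B) * γ N q c m = γ N q c m * (xel N q c i * B) := by
  have hd : (dual i).val = N - 1 - i.val := rfl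
  have hmN := m.2
  rcases show m.val < i.val ∨ (i.val < m.val ∧ m.val < (dual i).val) ∨ (dual i).val < m.val by
    omega with hm | ⟨hma, hmb⟩ | hm
  · refine pel_comm_of hi hB1 hB2 (σ := q^4) (pow_ne_zero 4 hq) ?_ (A_comm_low hi hm)
    have hx : (γ N q c i * γ N q c (dual i)) * γ N q c m =
        ((-(q^2)) * (-(q^2))) • (γ N q c m * (γ N q c i * γ N q c (dual i))) :=
      mul_comm_smul (e_comm_low hi hm) (f_comm_low hi hm)
    rw [show xel N q c i = γ N q c i * γ N q c (dual i) from rfl, hx]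
    congr 1; ring
  · refine pel_comm_of hi hB1 hB2 (σ := 1) one_ne_zero ?_ ?_
    · have hx : (γ N q c i * γ N q c (dual i)) * γ N q c m =
          ((-(q⁻¹^2)) * (-(q^2))) • (γ N q c m * (γ N q c i * γ N q c (dual i))) :=
        mul_comm_smul (e_comm_mid hq hi hma hmb) (f_comm_mid hi hma hmb)
      rw [show xel N q c i = γ N q c i * γ N q c (dual i) from rfl, one_smul, hx,
        show (-(q⁻¹^2)) * (-(q^2)) = 1 by field_simp, one_smul]
    · rw [one_smul]; exact A_comm_mid hq hi hma hmb
  · refine pel_comm_of hi hB1 hB2 (σ := q⁻¹^4) (pow_ne_zero 4 (inv_ne_zero hq)) ?_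
      (A_comm_high hq hi hm)
    have hx : (γ N q c i * γ N q c (dual i)) * γ N q c m =
        ((-(q⁻¹^2)) * (-(q⁻¹^2))) • (γ N q c m * (γ N q c i * γ N q c (dual i))) :=
      mul_comm_smul (e_comm_high hq hi hm) (f_comm_high hq hi hm)
    rw [show xel N q c i = γ N q c i * γ N q c (dual i) from rfl, hx]
    congr 1; ring

include hi hB1 hB2 in
lemma pel_comm_z {z : Cl N q c} {μi : ℂ} (hμi : μi ≠ 0)
    (hze : z * γ N q c i = μi • (γ N q c i * z))
    (hzf : γ N q c (dual i) * z = μi • (z * γ N q c (dual i))) :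
    (xel N q c i * B) * z = z * (xel N q c i * B) := by
  have hzf' : z * γ N q c (dual i) = μi⁻¹ • (γ N q c (dual i) * z) := by
    rw [hzf, smul_smul, inv_mul_cancel₀ hμi, one_smul]
  have hzx : z * xel N q c i = xel N q c i * z := by
    calc z * (γ N q c i * γ N q c (dual i)) = (z * γ N q c i) * γ N q c (dual i) :=
          (mul_assoc _ _ _).symm
    _ = μi • (γ N q c i * (z * γ N q c (dual i))) := by rw [hze, smul_mul_assoc, mul_assoc]
    _ = (μi * μi⁻¹) • (γ N q c i * (γ N q c (dual i) * z)) := by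
          rw [hzf', mul_smul_comm, smul_smul]
    _ = (γ N q c i * γ N q c (dual i)) * z := by
          rw [mul_inv_cancel₀ hμi, one_smul, mul_assoc]
  have hAz : Ael N q c i * z = z * Ael N q c i := A_comm_z hμi hze hzf
  have hBz : B * z = z * B := inv_comm hB1 hB2 hAz
  calc xel N q c i * B * z = xel N q c i * (B * z) := mul_assoc _ _ _
  _ = (xel N q c i * z) * B := by rw [hBz, mul_assoc]
  _ = (z * xel N q c i) * B := by rw [hzx]
  _ = z * (xel N q c i * B) := mul_assoc _ _ _

end Pel

-- ## Part 6 : degree-zero from commutation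

lemma degZeroAt_of_comm (hq : q ≠ 0) (hq2 : q + q⁻¹ ≠ 0) (hc : c ≠ 0)
    {i : ℕ} (hiN : 2 * i + 1 < N) {z : Cl N q c} {μi : ℂ} (hμi : μi ≠ 0)
    (hze : z * γ N q c ⟨i, by omega⟩ = μi • (γ N q c ⟨i, by omega⟩ * z))
    (hzf : γ N q c (dual ⟨i, by omega⟩) * z = μi • (z * γ N q c (dual ⟨i, by omega⟩))) :
    DegZeroAt N q c i z := by
  intro t ht F hF
  obtain ⟨s, hs⟩ := IsAlgClosed.exists_pow_nat_eq t (n := 2) (by norm_num)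
  have hs0 : s ≠ 0 := fun h => ht (by rw [← hs, h]; ring)
  obtain ⟨B, hB1, hB2⟩ := A_inv i hiN hq hq2 hc
  have hiN' : 2 * ((⟨i, by omega⟩ : Fin N)).val + 1 < N := hiN
  set p : Cl N q c := xel N q c ⟨i, by omega⟩ * B with hpdef
  have hpp : p * p = p := pel_sq hiN' hB1 hB2
  have hpe : p * γ N q c ⟨i, by omega⟩ = γ N q c ⟨i, by omega⟩ := pel_e hiN' hB1 hB2
  have hep : γ N q c ⟨i, by omega⟩ * p = 0 := e_pel hiN'
  have hpf : p * γ N q c (dual ⟨i, by omega⟩) = 0 := pel_f hiN' hB1 hB2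
  have hfp : γ N q c (dual ⟨i, by omega⟩) * p = γ N q c (dual ⟨i, by omega⟩) :=
    f_pel hiN' hB1 hB2
  have hpγ : ∀ m : Fin N, m.val ≠ i → m.val + i + 1 ≠ N → p * γ N q c m = γ N q c m * p := by
    intro m h1 h2
    exact pel_comm_γ hq hiN' hB1 hB2 h1 (by simp only [dual_val]; omega)
  have hpz : p * z = z * p := pel_comm_z hiN' hB1 hB2 hμi hze hzf
  set u : Cl N q c := s⁻¹ • 1 + (s - s⁻¹) • p with hu
  set u' : Cl N q c := s • 1 + (s⁻¹ - s) • p with hu'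
  have huu' : u * u' = 1 := by
    rw [hu, hu']
    simp only [mul_add, add_mul, smul_mul_assoc, mul_smul_comm, smul_smul, one_mul, mul_one,
      hpp]
    match_scalars <;> field_simp <;> ring
  have hiNN : i < N := by omega
  have hint : ∀ w, u * w = F w * u := by
    apply cl_induction
    · intro r
      rw [AlgHom.commutes, ← Algebra.commutes]
    · intro j
      by_cases hji : j.val = i
      · have hj : j = ⟨i, hiNN⟩ := Fin.ext hji
        subst hj
        rw [hF, if_pos hji, hu]
        simp only [add_mul, mul_add, smul_mul_assoc, mul_smul_comm, one_mul, mul_one,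
          hpe, hep, mul_zero, smul_zero, add_zero, smul_smul]
        match_scalars
        rw [← hs]; field_simp; ring
      · by_cases hjd : j.val + i + 1 = N
        · have hj : j = dual ⟨i, hiNN⟩ := Fin.ext (by simp only [dual_val]; omega)
          subst hj
          rw [hF, if_neg hji, if_pos hjd, hu]
          simp only [add_mul, mul_add, smul_mul_assoc, mul_smul_comm, one_mul, mul_one,
            hpf, hfp, mul_zero, smul_zero, add_zero, smul_smul]
          match_scalars
          rw [← hs]; field_simp; ring
        · rw [hF, if_neg hji, if_neg hjd, one_smul, hu]
          simp only [add_mul, mul_add, smul_mul_assoc, mul_smul_comm, one_mul, mul_one,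
            hpγ j hji hjd]
    · intro a b ha hb
      rw [map_add, mul_add, ha, hb, ← add_mul]
    · intro a b ha hb
      rw [map_mul, ← mul_assoc, ha, mul_assoc, hb, ← mul_assoc]
  have h1 : u * z = z * u := by
    rw [hu]
    simp only [add_mul, mul_add, smul_mul_assoc, mul_smul_comm, one_mul, mul_one, hpz]
  have h2 : z * u = F z * u := by rw [← h1, hint z]
  calc F z = F z * (u * u') := by rw [huu', mul_one]
  _ = (F z * u) * u' := (mul_assoc _ _ _).symm
  _ = (z * u) * u' := by rw [← h2]
  _ = z * (u * u') := mul_assoc _ _ _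
  _ = z := by rw [huu', mul_one]


-- ## Part 7 : bridges between (ii) and (iii)

lemma prod_to_pointwise {z' : Cl N q c} {m : ℕ} (hmN : m < N) {cm μm : ℂ} (hcm : cm ≠ 0)
    (h1 : z' * prodFirst N q c m = cm • (prodFirst N q c m * z'))
    (h2 : z' * prodFirst N q c (m+1) = (cm * μm) • (prodFirst N q c (m+1) * z')) :
    prodFirst N q c m * (z' * γ N q c ⟨m, hmN⟩ - μm • (γ N q c ⟨m, hmN⟩ * z')) = 0 := by
  rw [prodFirst_succ m hmN, ← mul_assoc, h1, smul_mul_assoc, mul_assoc, mul_assoc] at h2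
  -- h2 : cm • (prodFirst m * (z' * γ)) = (cm*μm) • (prodFirst m * (γ * z'))
  have h3 : prodFirst N q c m * (z' * γ N q c ⟨m, hmN⟩) =
      μm • (prodFirst N q c m * (γ N q c ⟨m, hmN⟩ * z')) := by
    apply smul_right_injective (Cl N q c) hcm
    show cm • (prodFirst N q c m * (z' * γ N q c ⟨m, hmN⟩)) =
      cm • (μm • (prodFirst N q c m * (γ N q c ⟨m, hmN⟩ * z')))
    rw [h2, smul_smul]
  rw [mul_sub, mul_smul_comm, sub_eq_zero, h3]

lemma pointwise_to_prod {z' : Cl N q c} {kk : ℕ} (hkkN : kk ≤ N) (μ : ℕ → ℂ)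
    (h : ∀ m (hm : m < kk),
      prodFirst N q c m * (z' * γ N q c ⟨m, by omega⟩ - μ m • (γ N q c ⟨m, by omega⟩ * z')) = 0) :
    ∀ m, m ≤ kk → z' * prodFirst N q c m =
      (∏ l ∈ Finset.range m, μ l) • (prodFirst N q c m * z') := by
  intro m
  induction m with
  | zero => intro _; simp [prodFirst_zero]
  | succ d IH =>
      intro hd
      have h1 := IH (by omega)
      have h0 := h d (by omega)
      rw [mul_sub, mul_smul_comm, sub_eq_zero] at h0
      rw [prodFirst_succ d (by omega), ← mul_assoc, h1, Finset.prod_range_succ,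
        smul_mul_assoc, mul_assoc, h0, smul_smul, mul_assoc]



/-- equivalence of the three characterizations of elements `z` with
`zγ_i = μ_i γ_i z` (and the same for `τ(z)`) for `i = 1,…,k`. -/
theorem commutation_tfae (n ε : ℕ) (hn : 1 ≤ n) (hε : ε ≤ 1)
    (N : ℕ) (hNdef : N = 2 * n + ε) (hN : 3 ≤ N) (q c : ℂ)
    (hq : q ≠ 0) (hqr : ∀ m : ℕ, 0 < m → q ^ m ≠ 1) (hc : c ≠ 0)
    (k : ℕ) (hk : k ≤ n) (μ : ℕ → ℂ) (hμ : ∀ i < k, μ i ≠ 0)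
    (τ : Cl N q c →ₗ[ℂ] Cl N q c) (hτ1 : τ 1 = 1)
    (hτm : ∀ x y : Cl N q c, τ (x * y) = τ y * τ x)
    (hτγ : ∀ i : Fin N, τ (γ N q c i) = γ N q c (dual i))
    (z : Cl N q c) :
    ((∀ i : Fin N, i.val < k →
        z * γ N q c i = μ i.val • (γ N q c i * z) ∧
        τ z * γ N q c i = μ i.val • (γ N q c i * τ z)) ↔
      ((∀ i < k, DegZeroAt N q c i z) ∧
        ∀ m ≤ k,
          z * prodFirst N q c m =
            (∏ i ∈ Finset.range m, μ i) • (prodFirst N q c m * z) ∧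
          τ z * prodFirst N q c m =
            (∏ i ∈ Finset.range m, μ i) • (prodFirst N q c m * τ z))) ∧
    (((∀ i < k, DegZeroAt N q c i z) ∧
        ∀ m ≤ k,
          z * prodFirst N q c m =
            (∏ i ∈ Finset.range m, μ i) • (prodFirst N q c m * z) ∧
          τ z * prodFirst N q c m =
            (∏ i ∈ Finset.range m, μ i) • (prodFirst N q c m * τ z)) ↔
      ((∀ i < k, DegZeroAt N q c i z) ∧
        ∀ i : Fin N, i.val < k →
          prodFirst N q c i.val * (z * γ N q c i - μ i.val • (γ N q c i * z)) = 0 ∧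
          prodFirst N q c i.val *
            (τ z * γ N q c i - μ i.val • (γ N q c i * τ z)) = 0)) := by
  -- basic numerology
  have hgood : ∀ j, j < k → 2 * j + 1 < N := by intro j hj; omega
  have hkN : 2 * k ≤ N := by omega
  have hq2 : q + q⁻¹ ≠ 0 := by
    intro h
    apply hqr 4 (by norm_num)
    have h' : q * (q + q⁻¹) = 0 := by rw [h, mul_zero]
    rw [mul_add, mul_inv_cancel₀ hq] at h'
    have h2 : q ^ 2 = -1 := by linear_combination h'
    calc q ^ 4 = (q ^ 2) ^ 2 := by ring
    _ = 1 := by rw [h2]; norm_num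
  -- τ facts
  have τalg : ∀ r : ℂ, τ (algebraMap ℂ (Cl N q c) r) = algebraMap ℂ (Cl N q c) r := by
    intro r
    rw [Algebra.algebraMap_eq_smul_one, map_smul, hτ1]
  have ddual : ∀ j : Fin N, dual (dual j) = j := by
    intro j
    have hj2 := j.isLt
    ext
    simp only [dual_val]
    omega
  have τsq : ∀ w, τ (τ w) = w := by
    apply cl_induction
    · intro r; rw [τalg, τalg]
    · intro j; rw [hτγ, hτγ, ddual]
    · intro a b ha hb; rw [map_add, map_add, ha, hb]
    · intro a b ha hb; rw [hτm, hτm, ha, hb]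
  have τflip : ∀ (w : Cl N q c) (j : Fin N) (s : ℂ), w * γ N q c j = s • (γ N q c j * w) →
      γ N q c (dual j) * τ w = s • (τ w * γ N q c (dual j)) := by
    intro w j s h
    have h' := congrArg τ h
    rw [hτm, map_smul, hτm, hτγ] at h'
    exact h'
  -- the peeling implication : pointwise products-zero ⇒ pointwise commutation
  have hpt_imp_i : (∀ j (hj : j < k),
      prodFirst N q c j * (z * γ N q c ⟨j, by omega⟩ - μ j • (γ N q c ⟨j, by omega⟩ * z)) = 0 ∧
      prodFirst N q c j *
        (τ z * γ N q c ⟨j, by omega⟩ - μ j • (γ N q c ⟨j, by omega⟩ * τ z)) = 0) →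
      ∀ j (hj : j < k), z * γ N q c ⟨j, by omega⟩ = μ j • (γ N q c ⟨j, by omega⟩ * z) ∧
        τ z * γ N q c ⟨j, by omega⟩ = μ j • (γ N q c ⟨j, by omega⟩ * τ z) := by
    intro hp j
    induction j using Nat.strong_induction_on with
    | _ j IH =>
      intro hj
      have hrel : ∀ l (hl : l < j), (z * γ N q c ⟨l, by omega⟩ = μ l • (γ N q c ⟨l, by omega⟩ * z)) ∧
          (τ z * γ N q c ⟨l, by omega⟩ = μ l • (γ N q c ⟨l, by omega⟩ * τ z)) :=
        fun l hl => IH l hl (by omega)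
      have hfz : ∀ l (hl : l < j), γ N q c (dual ⟨l, by omega⟩) * z =
          μ l • (z * γ N q c (dual ⟨l, by omega⟩)) := by
        intro l hl
        have h' := τflip (τ z) ⟨l, by omega⟩ (μ l) ((hrel l hl).2)
        rwa [τsq z] at h'
      have hfτz : ∀ l (hl : l < j), γ N q c (dual ⟨l, by omega⟩) * τ z =
          μ l • (τ z * γ N q c (dual ⟨l, by omega⟩)) :=
        fun l hl => τflip z ⟨l, by omega⟩ (μ l) ((hrel l hl).1)
      have main : ∀ z'' : Cl N q c,
          (∀ l (hl : l < j), z'' * γ N q c ⟨l, by omega⟩ = μ l • (γ N q c ⟨l, by omega⟩ * z'')) →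
          (∀ l (hl : l < j), γ N q c (dual ⟨l, by omega⟩) * z'' =
            μ l • (z'' * γ N q c (dual ⟨l, by omega⟩))) →
          prodFirst N q c j *
            (z'' * γ N q c ⟨j, by omega⟩ - μ j • (γ N q c ⟨j, by omega⟩ * z'')) = 0 →
          z'' * γ N q c ⟨j, by omega⟩ = μ j • (γ N q c ⟨j, by omega⟩ * z'') := by
        intro z'' h1 h2 h0
        refine sub_eq_zero.mp (peel hq hq2 hc (kk := k) hkN μ _ j hj ?_ ?_ h0)
        · intro l hl
          exact conj_rel (h2 l hl)
            (gamma_swap ⟨j, by omega⟩ (dual ⟨l, by omega⟩)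
              (by simp only [Fin.lt_def, dual_val]; omega)
              (by simp only [dual_val]; omega))
        · intro l hl
          exact comm_rel (A_comm_z (hμ l (by omega)) (h1 l hl) (h2 l hl))
            (A_comm_mid hq (hgood l (by omega)) (by simpa using hl)
              (by simp only [dual_val]; omega))
      exact ⟨main z (fun l hl => (hrel l hl).1) hfz (hp j hj).1,
        main (τ z) (fun l hl => (hrel l hl).2) hfτz (hp j hj).2⟩
  -- products-zero from products
  have hii_iii : (∀ m ≤ k,
        z * prodFirst N q c m = (∏ i ∈ Finset.range m, μ i) • (prodFirst N q c m * z) ∧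
        τ z * prodFirst N q c m = (∏ i ∈ Finset.range m, μ i) • (prodFirst N q c m * τ z)) →
      ∀ i : Fin N, i.val < k →
        prodFirst N q c i.val * (z * γ N q c i - μ i.val • (γ N q c i * z)) = 0 ∧
        prodFirst N q c i.val * (τ z * γ N q c i - μ i.val • (γ N q c i * τ z)) = 0 := by
    intro hprod i0 hi0
    have hc0 : (∏ l ∈ Finset.range i0.val, μ l) ≠ 0 :=
      Finset.prod_ne_zero_iff.mpr (fun l hl => hμ l (by
        have := Finset.mem_range.mp hl; omega))
    have e1 := (hprod (i0.val + 1) (by omega)).1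
    rw [Finset.prod_range_succ] at e1
    have e2 := (hprod (i0.val + 1) (by omega)).2
    rw [Finset.prod_range_succ] at e2
    exact ⟨prod_to_pointwise i0.isLt hc0 (hprod i0.val (by omega)).1 e1,
      prod_to_pointwise i0.isLt hc0 (hprod i0.val (by omega)).2 e2⟩
  refine ⟨⟨?_, ?_⟩, ⟨?_, ?_⟩⟩
  · -- (i) → (ii)
    intro h1
    constructor
    · intro i0 hi0
      refine degZeroAt_of_comm hq hq2 hc (hgood i0 hi0) (hμ i0 hi0)
        (h1 ⟨i0, by omega⟩ hi0).1 ?_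
      have h' := τflip (τ z) ⟨i0, by omega⟩ (μ i0) ((h1 ⟨i0, by omega⟩ hi0).2)
      rwa [τsq z] at h'
    · intro m hm
      exact ⟨comm_prodFirst m (by omega) (fun l hl => (h1 ⟨l, by omega⟩ (show l < k by omega)).1),
        comm_prodFirst m (by omega) (fun l hl => (h1 ⟨l, by omega⟩ (show l < k by omega)).2)⟩
  · -- (ii) → (i)
    rintro ⟨hdeg, hprod⟩
    intro i0 hi0
    have hpt : ∀ j (hj : j < k),
        prodFirst N q c j * (z * γ N q c ⟨j, by omega⟩ - μ j • (γ N q c ⟨j, by omega⟩ * z)) = 0 ∧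
        prodFirst N q c j *
          (τ z * γ N q c ⟨j, by omega⟩ - μ j • (γ N q c ⟨j, by omega⟩ * τ z)) = 0 :=
      fun j hj => hii_iii hprod ⟨j, by omega⟩ hj
    exact hpt_imp_i hpt i0.val hi0
  · -- (ii) → (iii)
    rintro ⟨hdeg, hprod⟩
    exact ⟨hdeg, hii_iii hprod⟩
  · -- (iii) → (ii)
    rintro ⟨hdeg, hpt⟩
    refine ⟨hdeg, ?_⟩
    intro m hm
    exact ⟨pointwise_to_prod (z' := z) (kk := k) (by omega) μ
        (fun j hj => (hpt ⟨j, by omega⟩ hj).1) m hm,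
      pointwise_to_prod (z' := τ z) (kk := k) (by omega) μ
        (fun j hj => (hpt ⟨j, by omega⟩ hj).2) m hm⟩


end FRT
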